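/- Let X be a standard Borel space, n ≥ 1, and let P and Q be Markov kernels on X^n such that Q(x, A) ≥ (1−ε)·P(x, A) for all x ∈ X^n and measurable A ⊆ X^n, where ε ∈ [0,1]. Suppose that for every j ∈ {1,…,n} and every pair x, y ∈ X^n with x_k = y_k for all k ≠ j, a coupling Ψ_{j,x,y} of P(x,·) and P(y,·) is given, and define the n×n matrix W by W_{i,j} = sup{Ψ_{j,x,y}({(x', y') : x'_i ≠ y'_i}) : x, y ∈ X^n with x_k = y_k for all k ≠ j}. Then the matrix Ŵ with entries Ŵ_{i,j} = W_{i,j} + ε is a Wasserstein matrix for Q. -/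

import Mathlib

open MeasureTheory ProbabilityTheory Finset
open scoped ENNReal

/-- Oscillation of `f` with respect to the `i`-th coordinate. -/
noncomputable def osc {n : ℕ} {X : Type*} (i : Fin n) (f : (Fin n → X) → ℝ) : ℝ :=
  sSup {d : ℝ | ∃ x z : Fin n → X, (∀ k, k ≠ i → x k = z k) ∧ d = |f x - f z|}

/-- `W` is a Wasserstein matrix for the Markov kernel `P` on `X^n`. -/
def IsWassersteinMatrix {n : ℕ} {X : Type*} [MeasurableSpace X]
    (P : Kernel (Fin n → X) (Fin n → X)) (W : Matrix (Fin n) (Fin n) ℝ) : Prop :=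
  (∀ i j, 0 ≤ W i j) ∧
  ∀ f : (Fin n → X) → ℝ, Measurable f → (∃ C, ∀ x, |f x| ≤ C) →
    ∀ j, osc j (fun x => ∫ y, f y ∂(P x)) ≤ ∑ i, osc i f * W i j

/-- `Ψ` is a coupling of `μ` and `ν`. -/
def IsCoupling {E : Type*} [MeasurableSpace E] (Ψ : Measure (E × E)) (μ ν : Measure E) : Prop :=
  Ψ.map Prod.fst = μ ∧ Ψ.map Prod.snd = ν

/-- `k`-fold composition of a Markov kernel with itself. -/
noncomputable def kpow {E : Type*} [MeasurableSpace E] (P : Kernel E E) : ℕ → Kernel E E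
  | 0 => Kernel.id
  | (k + 1) => P ∘ₖ kpow P k

/-- Maximum absolute row sum norm `‖A‖_∞`. -/
noncomputable def rowNorm {n : ℕ} (A : Matrix (Fin n) (Fin n) ℝ) : ℝ :=
  ⨆ i, ∑ j, |A i j|

/-!
Minorization splits `Q x = (1 - ε) • P x + R x`, where `R x` has mass `ε`. Telescoping along the
coordinates bounds `f u - f v` by the sum of `osc i f` over the coordinates where `u` and `v`
differ; integrating this against the coupling `Ψ j x y` bounds the `P`-part of
`∫ f ∂Q x - ∫ f ∂Q y` by `∑ i, osc i f * W i j`. The residual measures `R x` and `R y` have the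
same mass `ε`, so their integrals of `f` differ by at most `ε * (sup f - inf f) ≤ ε * ∑ i, osc i f`.
-/

section Telescoping

variable {ι X : Type*} {f : (ι → X) → ℝ} {o : ι → ℝ}

theorem sub_le_sum_of_eqOn_compl [DecidableEq ι]
    (ho : ∀ i a b, (∀ k, k ≠ i → a k = b k) → f a - f b ≤ o i)
    (s : Finset ι) {u v : ι → X} (h : Set.EqOn u v (↑s)ᶜ) : f u - f v ≤ ∑ i ∈ s, o i := by
  induction s using Finset.induction_on generalizing u with
  | empty => simp [funext fun k => h (Finset.notMem_empty k)]
  | insert a t hat ih =>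
    set u' := Function.update u a (v a)
    have h₁ : f u - f u' ≤ o a := ho a u u' fun k hk => (Function.update_of_ne hk _ _).symm
    have h₂ : f u' - f v ≤ ∑ i ∈ t, o i := ih fun k hk => by
      by_cases hka : k = a
      · simp [u', hka]
      · simpa [u', hka] using h (by simpa [hka] using hk)
    rw [Finset.sum_insert hat]
    linarith

variable [Fintype ι] [MeasurableSpace X]

theorem integral_sub_le_sum_mul_measureReal_ne {μ ν : Measure (ι → X)}
    {Φ : Measure ((ι → X) × (ι → X))} [IsFiniteMeasure Φ]
    (hΦ₁ : Φ.map Prod.fst = μ) (hΦ₂ : Φ.map Prod.snd = ν)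
    (hμ : Integrable f μ) (hν : Integrable f ν)
    (ho : ∀ i a b, (∀ k, k ≠ i → a k = b k) → f a - f b ≤ o i) (ho₀ : ∀ i, 0 ≤ o i) :
    ∫ x, f x ∂μ - ∫ x, f x ∂ν ≤ ∑ i, o i * Φ.real {q | q.1 i ≠ q.2 i} := by
  classical
  subst hΦ₁ hΦ₂
  -- the disagreement sets need not be measurable, so integrate over their measurable hulls
  set S : ι → Set ((ι → X) × (ι → X)) := fun i => toMeasurable Φ {q | q.1 i ≠ q.2 i}
  have hS : ∀ i, MeasurableSet (S i) := fun i => measurableSet_toMeasurable _ _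
  have hind : ∀ i, Integrable ((S i).indicator fun _ => o i) Φ :=
    fun i => (integrable_const _).indicator (hS i)
  have hfst := hμ.comp_measurable measurable_fst
  have hsnd := hν.comp_measurable measurable_snd
  have hpt : ∀ q : (ι → X) × (ι → X), f q.1 - f q.2 ≤ ∑ i, (S i).indicator (fun _ => o i) q := by
    intro q
    refine (sub_le_sum_of_eqOn_compl ho {i | q.1 i ≠ q.2 i} fun k hk => by simpa using hk).trans ?_
    rw [Finset.sum_filter]
    refine Finset.sum_le_sum fun i _ => ?_
    split_ifs with hi
    · exact (Set.indicator_of_mem (subset_toMeasurable Φ {q | q.1 i ≠ q.2 i} hi) fun _ => o i).ge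
    · exact Set.indicator_nonneg (fun _ _ => ho₀ i) q
  calc ∫ x, f x ∂Φ.map Prod.fst - ∫ x, f x ∂Φ.map Prod.snd = ∫ q, (f q.1 - f q.2) ∂Φ := by
        rw [integral_map measurable_fst.aemeasurable hμ.1,
          integral_map measurable_snd.aemeasurable hν.1]
        exact (integral_sub hfst hsnd).symm
    _ ≤ ∫ q, ∑ i, (S i).indicator (fun _ => o i) q ∂Φ :=
        integral_mono (hfst.sub hsnd) (integrable_finsetSum _ fun i _ => hind i) hpt
    _ = ∑ i, o i * Φ.real {q | q.1 i ≠ q.2 i} := by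
        rw [integral_finsetSum _ fun i _ => hind i]
        simp [S, integral_indicator_const _ (hS _), measureReal_def, measure_toMeasurable, mul_comm]

end Telescoping

section Minorization

variable {E : Type*} [MeasurableSpace E] {g : E → ℝ}

theorem integral_sub_le_of_measureReal_univ_eq {ρ₁ ρ₂ : Measure E} [IsFiniteMeasure ρ₁]
    [IsFiniteMeasure ρ₂] (hρ : ρ₁.real Set.univ = ρ₂.real Set.univ)
    (h₁ : Integrable g ρ₁) (h₂ : Integrable g ρ₂) {M : ℝ} (hM : ∀ u v, g u - g v ≤ M) :
    ∫ x, g x ∂ρ₁ - ∫ x, g x ∂ρ₂ ≤ ρ₁.real Set.univ * M := by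
  rcases isEmpty_or_nonempty E with hE | hE
  · simp [Measure.eq_zero_of_isEmpty ρ₁, Measure.eq_zero_of_isEmpty ρ₂]
  set s := ⨆ u, g u
  have hbdd : BddAbove (Set.range g) :=
    ⟨g hE.some + M, by rintro _ ⟨u, rfl⟩; linarith [hM u hE.some]⟩
  have hle : ∀ u, g u ≤ s := le_ciSup hbdd
  have hge : ∀ v, s - M ≤ g v := fun v => by
    have : s ≤ g v + M := ciSup_le fun u => by linarith [hM u v]
    linarith
  have i₁ : ∫ x, g x ∂ρ₁ ≤ ρ₁.real Set.univ * s := by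
    simpa using integral_mono h₁ (integrable_const s) hle
  have i₂ : ρ₂.real Set.univ * (s - M) ≤ ∫ x, g x ∂ρ₂ := by
    simpa using integral_mono (integrable_const _) h₂ hge
  rw [← hρ] at i₂
  linarith [mul_sub (ρ₁.real Set.univ) s M]

variable {μ μ' : Measure E} {c : ℝ}

theorem integral_eq_integral_sub_smul_add [IsFiniteMeasure μ'] (hc : 0 ≤ c)
    (hμ : ENNReal.ofReal c • μ ≤ μ') (hg : Integrable g μ') :
    ∫ x, g x ∂μ' = ∫ x, g x ∂(μ' - ENNReal.ofReal c • μ) + c * ∫ x, g x ∂μ := by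
  have := isFiniteMeasure_of_le μ' hμ
  conv_lhs => rw [← Measure.sub_add_cancel_of_le hμ]
  rw [integral_add_measure (hg.mono_measure Measure.sub_le) (hg.mono_measure hμ),
    integral_smul_measure, ENNReal.toReal_ofReal hc, smul_eq_mul]

theorem measureReal_sub_smul_univ [IsFiniteMeasure μ'] (hc : 0 ≤ c)
    (hμ : ENNReal.ofReal c • μ ≤ μ') :
    (μ' - ENNReal.ofReal c • μ).real Set.univ = μ'.real Set.univ - c * μ.real Set.univ := by
  have := isFiniteMeasure_of_le μ' hμ
  have : (μ' - ENNReal.ofReal c • μ + ENNReal.ofReal c • μ).real Set.univ = μ'.real Set.univ := by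
    rw [Measure.sub_add_cancel_of_le hμ]
  rw [measureReal_add_apply, measureReal_ennreal_smul_apply, ENNReal.toReal_ofReal hc] at this
  linarith

theorem integral_sub_le_of_smul_le {ν ν' : Measure E} [IsProbabilityMeasure μ]
    [IsProbabilityMeasure μ'] [IsProbabilityMeasure ν] [IsProbabilityMeasure ν'] (hc : 0 ≤ c)
    (hμ : ENNReal.ofReal c • μ ≤ μ') (hν : ENNReal.ofReal c • ν ≤ ν')
    (hgμ : Integrable g μ') (hgν : Integrable g ν') {M : ℝ} (hM : ∀ u v, g u - g v ≤ M) :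
    ∫ x, g x ∂μ' - ∫ x, g x ∂ν' ≤ c * (∫ x, g x ∂μ - ∫ x, g x ∂ν) + (1 - c) * M := by
  have hres := integral_sub_le_of_measureReal_univ_eq (ρ₁ := μ' - ENNReal.ofReal c • μ)
    (ρ₂ := ν' - ENNReal.ofReal c • ν)
    (by simp [measureReal_sub_smul_univ hc hμ, measureReal_sub_smul_univ hc hν])
    (hgμ.mono_measure Measure.sub_le) (hgν.mono_measure Measure.sub_le) hM
  rw [measureReal_sub_smul_univ hc hμ] at hres
  rw [integral_eq_integral_sub_smul_add hc hμ hgμ, integral_eq_integral_sub_smul_add hc hν hgν]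
  simp only [probReal_univ, mul_one] at hres
  linarith [mul_sub c (∫ x, g x ∂μ) (∫ x, g x ∂ν)]

end Minorization

section Oscillation

variable {n : ℕ} {X : Type*} {f : (Fin n → X) → ℝ} {i : Fin n}

theorem osc_nonneg : 0 ≤ osc i f :=
  Real.sSup_nonneg <| by rintro _ ⟨_, _, _, rfl⟩; exact abs_nonneg _

theorem sub_le_osc (hf : ∃ C, ∀ x, |f x| ≤ C) {a b : Fin n → X}
    (hab : ∀ k, k ≠ i → a k = b k) : f a - f b ≤ osc i f := by
  obtain ⟨C, hC⟩ := hf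
  refine (le_abs_self _).trans (le_csSup ⟨2 * C, ?_⟩ ⟨a, b, hab, rfl⟩)
  rintro _ ⟨x, z, -, rfl⟩
  linarith [abs_sub (f x) (f z), hC x, hC z]

theorem osc_le {c : ℝ} (hc : 0 ≤ c)
    (h : ∀ a b : Fin n → X, (∀ k, k ≠ i → a k = b k) → f a - f b ≤ c) : osc i f ≤ c := by
  refine Real.sSup_le ?_ hc
  rintro _ ⟨a, b, hab, rfl⟩
  exact abs_sub_le_iff.2 ⟨h a b hab, h b a fun k hk => (hab k hk).symm⟩

theorem sub_le_sum_osc (hf : ∃ C, ∀ x, |f x| ≤ C) (u v : Fin n → X) :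
    f u - f v ≤ ∑ i, osc i f :=
  sub_le_sum_of_eqOn_compl (fun _ _ _ => sub_le_osc hf) Finset.univ (by simp)

variable [MeasurableSpace X] {μ ν : Measure (Fin n → X)}

theorem integral_sub_le_sum_osc_mul_measureReal_ne {Φ : Measure ((Fin n → X) × (Fin n → X))}
    [IsFiniteMeasure Φ] (hΦ₁ : Φ.map Prod.fst = μ) (hΦ₂ : Φ.map Prod.snd = ν)
    (hf : Measurable f) (hfb : ∃ C, ∀ x, |f x| ≤ C) :
    ∫ x, f x ∂μ - ∫ x, f x ∂ν ≤ ∑ i, osc i f * Φ.real {q | q.1 i ≠ q.2 i} := by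
  obtain ⟨C, hC⟩ := hfb
  subst hΦ₁ hΦ₂
  exact integral_sub_le_sum_mul_measureReal_ne rfl rfl
    (.of_bound hf.aestronglyMeasurable C (ae_of_all _ hC))
    (.of_bound hf.aestronglyMeasurable C (ae_of_all _ hC))
    (fun _ _ _ => sub_le_osc ⟨C, hC⟩) fun _ => osc_nonneg

theorem integral_sub_le_add_mul_sum_osc {μ' ν' : Measure (Fin n → X)} [IsProbabilityMeasure μ]
    [IsProbabilityMeasure ν] [IsProbabilityMeasure μ'] [IsProbabilityMeasure ν'] {ε : ℝ}
    (hε : 0 ≤ ε) (hμ : ENNReal.ofReal (1 - ε) • μ ≤ μ') (hν : ENNReal.ofReal (1 - ε) • ν ≤ ν')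
    (hf : Measurable f) (hfb : ∃ C, ∀ x, |f x| ≤ C) {D : ℝ} (hD₀ : 0 ≤ D)
    (hD : ∫ x, f x ∂μ - ∫ x, f x ∂ν ≤ D) :
    ∫ x, f x ∂μ' - ∫ x, f x ∂ν' ≤ D + ε * ∑ i, osc i f := by
  obtain ⟨C, hC⟩ := hfb
  -- `c = max (1 - ε) 0`, so that `c ≤ 1` and `1 - c ≤ ε` also when `ε > 1`
  set c := (ENNReal.ofReal (1 - ε)).toReal with hc
  have hc₀ : 0 ≤ c := ENNReal.toReal_nonneg
  have hc₁ : c ≤ 1 := by rw [hc, ENNReal.toReal_ofReal']; exact max_le (by linarith) zero_le_one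
  have hcε : 1 - c ≤ ε := by rw [hc, ENNReal.toReal_ofReal']; linarith [le_max_left (1 - ε) 0]
  rw [← ENNReal.ofReal_toReal (a := ENNReal.ofReal (1 - ε)) ENNReal.ofReal_ne_top] at hμ hν
  have hsplit := integral_sub_le_of_smul_le hc₀ hμ hν
    (.of_bound hf.aestronglyMeasurable C (ae_of_all _ hC))
    (.of_bound hf.aestronglyMeasurable C (ae_of_all _ hC)) (sub_le_sum_osc ⟨C, hC⟩)
  have hM₀ : 0 ≤ ∑ i, osc i f := Finset.sum_nonneg fun i _ => osc_nonneg
  nlinarith [mul_le_mul_of_nonneg_left hD hc₀]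

end Oscillation

theorem stmt15_general {n : ℕ} {X : Type*} [MeasurableSpace X]
    (P Q : Kernel (Fin n → X) (Fin n → X)) [IsMarkovKernel P] [IsMarkovKernel Q]
    (ε : ℝ) (hε0 : 0 ≤ ε)
    (hminor : ∀ x, ∀ A : Set (Fin n → X), MeasurableSet A →
      ENNReal.ofReal (1 - ε) * P x A ≤ Q x A)
    (Ψ : Fin n → (Fin n → X) → (Fin n → X) → Measure ((Fin n → X) × (Fin n → X)))
    (hΨ : ∀ (j : Fin n) (x y : Fin n → X), (∀ k, k ≠ j → x k = y k) →
      IsProbabilityMeasure (Ψ j x y) ∧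
      (Ψ j x y).map Prod.fst = P x ∧ (Ψ j x y).map Prod.snd = P y)
    (W : Matrix (Fin n) (Fin n) ℝ)
    (hW : ∀ i j, W i j = sSup {r : ℝ | ∃ x y : Fin n → X, (∀ k, k ≠ j → x k = y k) ∧
      r = (Ψ j x y {q | q.1 i ≠ q.2 i}).toReal})
    (What : Matrix (Fin n) (Fin n) ℝ) (hWhat : ∀ i j, What i j = W i j + ε) :
    IsWassersteinMatrix Q What := by
  have hW₀ : ∀ i j, 0 ≤ W i j := fun i j =>
    hW i j ▸ Real.sSup_nonneg (by rintro _ ⟨_, _, _, rfl⟩; exact ENNReal.toReal_nonneg)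
  have hΨW : ∀ i j x y, (∀ k, k ≠ j → x k = y k) → (Ψ j x y).real {q | q.1 i ≠ q.2 i} ≤ W i j :=
    fun i j x y hxy => hW i j ▸ le_csSup ⟨1, by
      rintro _ ⟨x', y', hxy', rfl⟩
      have := (hΨ j x' y' hxy').1
      exact measureReal_le_one⟩ ⟨x, y, hxy, rfl⟩
  have hWhat₀ : ∀ i j, 0 ≤ What i j := fun i j => hWhat i j ▸ add_nonneg (hW₀ i j) hε0
  refine ⟨hWhat₀, fun f hf hfb j => osc_le
    (Finset.sum_nonneg fun i _ => mul_nonneg osc_nonneg (hWhat₀ i j)) fun x y hxy => ?_⟩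
  obtain ⟨_, hΨ₁, hΨ₂⟩ := hΨ j x y hxy
  have hP : ∫ z, f z ∂P x - ∫ z, f z ∂P y ≤ ∑ i, osc i f * W i j :=
    (integral_sub_le_sum_osc_mul_measureReal_ne hΨ₁ hΨ₂ hf hfb).trans
      (Finset.sum_le_sum fun i _ => mul_le_mul_of_nonneg_left (hΨW i j x y hxy) osc_nonneg)
  calc ∫ z, f z ∂Q x - ∫ z, f z ∂Q y ≤ ∑ i, osc i f * W i j + ε * ∑ i, osc i f :=
        integral_sub_le_add_mul_sum_osc hε0 (Measure.le_iff.2 (hminor x))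
          (Measure.le_iff.2 (hminor y)) hf hfb
          (Finset.sum_nonneg fun i _ => mul_nonneg osc_nonneg (hW₀ i j)) hP
    _ = ∑ i, osc i f * What i j := by
        rw [Finset.mul_sum, ← Finset.sum_add_distrib]
        exact Finset.sum_congr rfl fun i _ => by rw [hWhat]; ring

theorem stmt15 {n : ℕ} {X : Type*} [MeasurableSpace X] [StandardBorelSpace X] [Nonempty X]
    (P Q : Kernel (Fin n → X) (Fin n → X)) [IsMarkovKernel P] [IsMarkovKernel Q]
    (ε : ℝ) (hε0 : 0 ≤ ε) (hε1 : ε ≤ 1)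
    (hminor : ∀ x, ∀ A : Set (Fin n → X), MeasurableSet A →
      ENNReal.ofReal (1 - ε) * P x A ≤ Q x A)
    (Ψ : Fin n → (Fin n → X) → (Fin n → X) → Measure ((Fin n → X) × (Fin n → X)))
    (hΨ : ∀ (j : Fin n) (x y : Fin n → X), (∀ k, k ≠ j → x k = y k) →
      IsProbabilityMeasure (Ψ j x y) ∧
      (Ψ j x y).map Prod.fst = P x ∧ (Ψ j x y).map Prod.snd = P y)
    (W : Matrix (Fin n) (Fin n) ℝ)
    (hW : ∀ i j, W i j = sSup {r : ℝ | ∃ x y : Fin n → X, (∀ k, k ≠ j → x k = y k) ∧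
      r = (Ψ j x y {q | q.1 i ≠ q.2 i}).toReal})
    (What : Matrix (Fin n) (Fin n) ℝ) (hWhat : ∀ i j, What i j = W i j + ε) :
    IsWassersteinMatrix Q What :=
  stmt15_general P Q ε hε0 hminor Ψ hΨ W hW What hWhat
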